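/- Let d ≥ 5 and ν ≥ 1/(2d). Then there is a constant K depending only on d such that for every m ≥ 2 and x ∈ ℤ^d, ∑_{k+l+j=m, l,j≥1, k≥0} φ_{kν}(x)φ_{lν}(x)φ_{jν}(x) ≤ K·m^{−d/2}·∑_{k=1}^{⌊m/2⌋} k^{1−d/2} φ_{kν}(x), where φ_0(x) := δ_{0,x} and φ_η(x) = (2πη)^{−d/2}exp(−|x|²/(2η)) for η > 0. -/

import Mathlib

/-!
Bound each product `φ_k φ_l φ_j` by keeping the Gaussian of a smallest part `s` and estimating
the other two by the uniform bound `φ_{nν} ≤ (2πν)^{-d/2} n^{-d/2}`. One of these two parts is at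
least `m / 3`, which produces the factor `m^{-d/2}`, and summing the other one over its range
`n ≥ s` costs `∑_{n ≥ s} n^{-d/2} ≲ s^{1-d/2}` (here `d/2 > 1`). A smallest part together with one
other part determines the composition, so summing over all six ordered choices counts every
weight at most six times. The delta `φ_0` is dominated by `φ_ν / φ_ν(0)`, and `φ_ν(0)` is
bounded uniformly in `ν ≥ 1/(2d)`.
-/

/-- The centered Gaussian density on `ℝ^d` with covariance `η·Id`, evaluated at lattice
points, extended by the Dirac delta at `η = 0`. -/
noncomputable def gauss' (d : ℕ) (η : ℝ) (x : Fin d → ℤ) : ℝ :=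
  if η = 0 then (if x = 0 then 1 else 0)
  else (2 * Real.pi * η) ^ (-(d : ℝ) / 2) * Real.exp (-(∑ i, ((x i : ℝ)) ^ 2) / (2 * η))

open Finset Real

theorem sum_Icc_rpow_neg_le {t : ℝ} (ht : 1 < t) {a : ℕ} (ha : 1 ≤ a) (N : ℕ) :
    ∑ b ∈ Icc a N, (b : ℝ) ^ (-t) ≤ t / (t - 1) * (a : ℝ) ^ (1 - t) := by
  have ha0 : (0 : ℝ) < a := by exact_mod_cast ha
  rcases lt_or_ge N a with hN | hN
  · rw [Icc_eq_empty (by omega), sum_empty]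
    have : 0 < t / (t - 1) := div_pos (by linarith) (by linarith)
    positivity
  have hanti : AntitoneOn (fun x : ℝ => x ^ (-t)) (Set.Icc a N) := fun x hx y _ hxy =>
    rpow_le_rpow_of_nonpos (ha0.trans_le hx.1) hxy (by linarith)
  have htail : ∑ b ∈ Ioc a N, (b : ℝ) ^ (-t) ≤ (a : ℝ) ^ (1 - t) / (t - 1) := by
    have hzero : (0 : ℝ) ∉ Set.uIcc (a : ℝ) N := by
      rw [Set.uIcc_of_le (by exact_mod_cast hN)]
      exact fun h => ha0.not_ge h.1
    calc ∑ b ∈ Ioc a N, (b : ℝ) ^ (-t) = ∑ b ∈ Ico a N, ((b + 1 : ℕ) : ℝ) ^ (-t) := by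
          rw [← Ico_add_one_add_one_eq_Ioc, ← sum_Ico_add']
      _ ≤ ∫ x in (a : ℝ)..N, x ^ (-t) := hanti.sum_le_integral_Ico hN
      _ = ((a : ℝ) ^ (1 - t) - (N : ℝ) ^ (1 - t)) / (t - 1) := by
          rw [integral_rpow (Or.inr ⟨by linarith, hzero⟩), ← neg_div_neg_eq]
          ring_nf
      _ ≤ (a : ℝ) ^ (1 - t) / (t - 1) := by
          gcongr
          exact sub_le_self _ (by positivity)
  have hhead : (a : ℝ) ^ (-t) ≤ (a : ℝ) ^ (1 - t) :=
    rpow_le_rpow_of_exponent_le (by exact_mod_cast ha) (by linarith)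
  rw [Icc_eq_cons_Ioc hN, sum_cons]
  calc _ ≤ (a : ℝ) ^ (1 - t) + (a : ℝ) ^ (1 - t) / (t - 1) := add_le_add hhead htail
    _ = t / (t - 1) * (a : ℝ) ^ (1 - t) := by
      field_simp [show t - 1 ≠ 0 by linarith]
      ring

theorem sum_range_succ_eq_add_sum_Icc {M : Type*} [AddCommMonoid M] (f : ℕ → M) (m : ℕ) :
    ∑ k ∈ range (m + 1), f k = f 0 + ∑ k ∈ Icc 1 m, f k := by
  rw [range_eq_Ico, sum_eq_sum_Ico_succ_bot (Nat.succ_pos m), zero_add, Nat.succ_eq_add_one,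
    Ico_add_one_right_eq_Icc]

theorem sum_triangle_comp_le_sum_box_of_inj (m : ℕ) (H : ℕ × ℕ → ℝ) (hH : ∀ q, 0 ≤ H q)
    (e : ℕ × ℕ → ℕ × ℕ)
    (he_inj : ∀ p q : ℕ × ℕ, p.1 + p.2 < m → q.1 + q.2 < m → e p = e q → p = q)
    (he_le : ∀ p : ℕ × ℕ, p.1 + p.2 < m → (e p).1 ≤ m ∧ (e p).2 ≤ m) :
    ∑ k ∈ range m, ∑ l ∈ Icc 1 (m - 1 - k), H (e (k, l)) ≤
      ∑ q ∈ range (m + 1) ×ˢ range (m + 1), H q := by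
  set T := (range m ×ˢ range m).filter fun p => 1 ≤ p.2 ∧ p.1 + p.2 < m with hT
  have hmemT : ∀ p, p ∈ T ↔ p.1 + p.2 < m ∧ 1 ≤ p.2 := by
    intro p; simp only [hT, mem_filter, mem_product, mem_range]; omega
  rw [← sum_finset_product T _ _ (fun p => by rw [hmemT, mem_range, mem_Icc]; omega)
      (f := fun p => H (e p)),
    ← sum_image (fun p hp q hq => he_inj p q ((hmemT p).1 hp).1 ((hmemT q).1 hq).1)]
  refine sum_le_sum_of_subset_of_nonneg (fun q hq => ?_) (fun q _ _ => hH q)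
  obtain ⟨p, hp, rfl⟩ := mem_image.1 hq
  have := he_le p ((hmemT p).1 hp).1
  simp only [mem_product, mem_range]
  omega

theorem rpow_neg_mul_rpow_neg_le {u v M t : ℝ} (hu : 0 ≤ u) (hv : 0 ≤ v) (hM : 0 < M)
    (hMuv : M ≤ max u v) (ht : 0 ≤ t) :
    u ^ (-t) * v ^ (-t) ≤ M ^ (-t) * (u ^ (-t) + v ^ (-t)) := by
  have hu' : 0 ≤ u ^ (-t) := by positivity
  have hv' : 0 ≤ v ^ (-t) := by positivity
  have hM' : 0 ≤ M ^ (-t) := by positivity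
  rcases le_total u v with huv | huv
  · have : v ^ (-t) ≤ M ^ (-t) :=
      rpow_le_rpow_of_nonpos hM (by simpa [huv] using hMuv) (by linarith)
    nlinarith
  · have : u ^ (-t) ≤ M ^ (-t) :=
      rpow_le_rpow_of_nonpos hM (by simpa [huv] using hMuv) (by linarith)
    nlinarith

section ThreePartCompositions

variable (G : ℕ → ℝ) (t : ℝ) (m : ℕ)

/-- The weight `G s * w ^ (-t)` of the composition `m = s + w + r` when its part `s` is a
smallest one: the condition `2 * s + w ≤ m` says `s ≤ r`. -/
noncomputable def minPartWeight (s w : ℕ) : ℝ :=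
  if s ≤ w ∧ 2 * s + w ≤ m then G s * (w : ℝ) ^ (-t) else 0

variable {G t m}

theorem sum_minPartWeight_eq (s : ℕ) :
    ∑ w ∈ range (m + 1), minPartWeight G t m s w =
      G s * ∑ w ∈ range (m + 1) with s ≤ w ∧ 2 * s + w ≤ m, (w : ℝ) ^ (-t) := by
  rw [mul_sum, sum_filter]
  rfl

variable (hGnn : ∀ n, 0 ≤ G n)
include hGnn

theorem minPartWeight_nonneg (s w : ℕ) : 0 ≤ minPartWeight G t m s w := by
  unfold minPartWeight
  split_ifs
  · exact mul_nonneg (hGnn s) (by positivity)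
  · exact le_rfl

theorem sum_box_minPartWeight_le (ht : 1 < t) :
    ∑ q ∈ range (m + 1) ×ˢ range (m + 1), minPartWeight G t m q.1 q.2 ≤
      t / (t - 1) * (G 0 + ∑ s ∈ Icc 1 (m / 2), (s : ℝ) ^ (1 - t) * G s) := by
  have hrow_zero : ∑ w ∈ range (m + 1), minPartWeight G t m 0 w ≤ t / (t - 1) * G 0 := by
    have hfilter : (range (m + 1)).filter (fun w => 0 ≤ w ∧ 2 * 0 + w ≤ m) = range (m + 1) :=
      filter_true_of_mem fun w hw => by rw [mem_range] at hw; omega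
    have htail := sum_Icc_rpow_neg_le ht le_rfl m
    rw [sum_minPartWeight_eq, hfilter, sum_range_succ_eq_add_sum_Icc, Nat.cast_zero,
      zero_rpow (by linarith), zero_add, mul_comm]
    simp only [Nat.cast_one, one_rpow, mul_one] at htail
    exact mul_le_mul_of_nonneg_right htail (hGnn 0)
  have hrow_pos : ∀ s, 1 ≤ s → ∑ w ∈ range (m + 1), minPartWeight G t m s w ≤
      t / (t - 1) * ((s : ℝ) ^ (1 - t) * G s) := by
    intro s hs
    rw [sum_minPartWeight_eq, mul_comm (G s), ← mul_assoc]
    refine mul_le_mul_of_nonneg_right ?_ (hGnn s)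
    calc _ ≤ ∑ w ∈ Icc s m, (w : ℝ) ^ (-t) :=
          sum_le_sum_of_subset_of_nonneg
            (fun w hw => by simp only [mem_filter, mem_range, mem_Icc] at hw ⊢; omega)
            (fun w _ _ => by positivity)
      _ ≤ _ := sum_Icc_rpow_neg_le ht hs m
  have hrow_large : ∀ s, m < 2 * s → ∑ w ∈ range (m + 1), minPartWeight G t m s w = 0 :=
    fun s hs => sum_eq_zero fun w _ => if_neg (by omega)
  rw [sum_product, sum_range_succ_eq_add_sum_Icc, mul_add, mul_sum]
  refine add_le_add hrow_zero ?_
  rw [← sum_subset (Icc_subset_Icc_right (Nat.div_le_self m 2))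
    (fun s hs hs' => hrow_large s (by simp only [mem_Icc] at hs hs'; omega))]
  exact sum_le_sum fun s hs => hrow_pos s (mem_Icc.1 hs).1

variable {A : ℝ} (hG : ∀ n, 1 ≤ n → G n ≤ A * (n : ℝ) ^ (-t))
include hG

theorem mul_mul_le_minPartWeight (ht : 0 ≤ t) {s u v : ℕ} (hsu : s ≤ u) (hsv : s ≤ v)
    (hu : 1 ≤ u) (hv : 1 ≤ v) (hm : s + u + v = m) :
    G s * G u * G v ≤
      A ^ 2 * ((m : ℝ) / 3) ^ (-t) * (minPartWeight G t m s u + minPartWeight G t m s v) := by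
  have hwu : minPartWeight G t m s u = G s * (u : ℝ) ^ (-t) := if_pos ⟨hsu, by omega⟩
  have hwv : minPartWeight G t m s v = G s * (v : ℝ) ^ (-t) := if_pos ⟨hsv, by omega⟩
  have hmax : (m : ℝ) / 3 ≤ max (u : ℝ) v := by
    rw [← Nat.cast_max, div_le_iff₀ (by norm_num)]
    exact_mod_cast (by omega : m ≤ max u v * 3)
  have hprod : G u * G v ≤ (A * (u : ℝ) ^ (-t)) * (A * (v : ℝ) ^ (-t)) :=
    mul_le_mul (hG u hu) (hG v hv) (hGnn v) ((hGnn u).trans (hG u hu))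
  have hm0 : (0 : ℝ) < m / 3 := by
    have : (0 : ℝ) < m := by exact_mod_cast (by omega : 0 < m)
    positivity
  calc G s * G u * G v = G s * (G u * G v) := mul_assoc _ _ _
    _ ≤ G s * (A ^ 2 * ((u : ℝ) ^ (-t) * (v : ℝ) ^ (-t))) := by
        rw [← mul_mul_mul_comm, ← sq] at hprod
        exact mul_le_mul_of_nonneg_left hprod (hGnn s)
    _ ≤ G s * (A ^ 2 * (((m : ℝ) / 3) ^ (-t) * ((u : ℝ) ^ (-t) + (v : ℝ) ^ (-t)))) := by
        refine mul_le_mul_of_nonneg_left (mul_le_mul_of_nonneg_left ?_ (sq_nonneg A)) (hGnn s)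
        exact rpow_neg_mul_rpow_neg_le (by positivity) (by positivity) hm0 hmax ht
    _ = _ := by rw [hwu, hwv]; ring

theorem mul_mul_le_sum_minPartWeight (ht : 0 ≤ t) {a b c : ℕ} (hb : 1 ≤ b) (hc : 1 ≤ c)
    (hm : a + b + c = m) :
    G a * G b * G c ≤ A ^ 2 * ((m : ℝ) / 3) ^ (-t) *
      (minPartWeight G t m a b + minPartWeight G t m a c + minPartWeight G t m b a +
        minPartWeight G t m b c + minPartWeight G t m c a + minPartWeight G t m c b) := by
  have hw := minPartWeight_nonneg (t := t) (m := m) hGnn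
  have hc0 : 0 ≤ A ^ 2 * ((m : ℝ) / 3) ^ (-t) := by positivity
  rcases (by omega : (a ≤ b ∧ a ≤ c) ∨ (b ≤ a ∧ b ≤ c) ∨ (c ≤ a ∧ c ≤ b))
    with ⟨hab, hac⟩ | ⟨hba, hbc⟩ | ⟨hca, hcb⟩
  · calc G a * G b * G c
        ≤ A ^ 2 * ((m : ℝ) / 3) ^ (-t) * (minPartWeight G t m a b + minPartWeight G t m a c) :=
          mul_mul_le_minPartWeight hGnn hG ht hab hac hb hc hm
      _ ≤ _ := mul_le_mul_of_nonneg_left (by linarith [hw b a, hw b c, hw c a, hw c b]) hc0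
  · calc G a * G b * G c = G b * G a * G c := by ring
      _ ≤ A ^ 2 * ((m : ℝ) / 3) ^ (-t) * (minPartWeight G t m b a + minPartWeight G t m b c) :=
          mul_mul_le_minPartWeight hGnn hG ht hba hbc (by omega) hc (by omega)
      _ ≤ _ := mul_le_mul_of_nonneg_left (by linarith [hw a b, hw a c, hw c a, hw c b]) hc0
  · calc G a * G b * G c = G c * G a * G b := by ring
      _ ≤ A ^ 2 * ((m : ℝ) / 3) ^ (-t) * (minPartWeight G t m c a + minPartWeight G t m c b) :=
          mul_mul_le_minPartWeight hGnn hG ht hca hcb (by omega) hb (by omega)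
      _ ≤ _ := mul_le_mul_of_nonneg_left (by linarith [hw a b, hw a c, hw b a, hw b c]) hc0

theorem sum_triple_product_le_sum_box (ht : 0 ≤ t) :
    ∑ k ∈ range m, ∑ l ∈ Icc 1 (m - 1 - k), G k * G l * G (m - k - l) ≤
      6 * (A ^ 2 * ((m : ℝ) / 3) ^ (-t)) *
        ∑ q ∈ range (m + 1) ×ˢ range (m + 1), minPartWeight G t m q.1 q.2 := by
  -- A smallest part and one other part determine the composition, so each of the six ordered
  -- choices of them injects the index triangle into the box.
  have hbox := sum_triangle_comp_le_sum_box_of_inj m (fun q => minPartWeight G t m q.1 q.2)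
    (fun q => minPartWeight_nonneg hGnn q.1 q.2)
  have h₁ := hbox (fun p => (p.1, p.2)) (by intro p q _ _ h; simpa using h) (by intro p hp; omega)
  have h₂ := hbox (fun p => (p.1, m - p.1 - p.2))
    (by intro p q _ _ h; simp only [Prod.ext_iff] at h ⊢; omega) (by intro p hp; omega)
  have h₃ := hbox (fun p => (p.2, p.1))
    (by intro p q _ _ h; simp only [Prod.ext_iff] at h ⊢; omega) (by intro p hp; omega)
  have h₄ := hbox (fun p => (p.2, m - p.1 - p.2))
    (by intro p q _ _ h; simp only [Prod.ext_iff] at h ⊢; omega) (by intro p hp; omega)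
  have h₅ := hbox (fun p => (m - p.1 - p.2, p.1))
    (by intro p q _ _ h; simp only [Prod.ext_iff] at h ⊢; omega) (by intro p hp; omega)
  have h₆ := hbox (fun p => (m - p.1 - p.2, p.2))
    (by intro p q _ _ h; simp only [Prod.ext_iff] at h ⊢; omega) (by intro p hp; omega)
  set c := A ^ 2 * ((m : ℝ) / 3) ^ (-t)
  have hc0 : 0 ≤ c := by positivity
  calc _ ≤ ∑ k ∈ range m, ∑ l ∈ Icc 1 (m - 1 - k), c *
          (minPartWeight G t m k l + minPartWeight G t m k (m - k - l) +
            minPartWeight G t m l k + minPartWeight G t m l (m - k - l) +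
            minPartWeight G t m (m - k - l) k + minPartWeight G t m (m - k - l) l) := by
        refine sum_le_sum fun k hk => sum_le_sum fun l hl => ?_
        rw [mem_range] at hk
        rw [mem_Icc] at hl
        exact mul_mul_le_sum_minPartWeight hGnn hG ht hl.1 (by omega) (by omega)
    _ ≤ _ := by
        rw [mul_comm 6 c, mul_assoc]
        simp_rw [← mul_sum]
        refine mul_le_mul_of_nonneg_left ?_ hc0
        simp only [sum_add_distrib]
        linarith

theorem sum_triple_product_le (ht : 1 < t) (hA : 0 < A) (hG0 : G 0 ≤ A⁻¹ * G 1) (hm : 2 ≤ m) :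
    ∑ k ∈ range m, ∑ l ∈ Icc 1 (m - 1 - k), G k * G l * G (m - k - l) ≤
      6 * (t / (t - 1)) * 3 ^ t * (A + A ^ 2) * (m : ℝ) ^ (-t) *
        ∑ s ∈ Icc 1 (m / 2), (s : ℝ) ^ (1 - t) * G s := by
  set Ψ := ∑ s ∈ Icc 1 (m / 2), (s : ℝ) ^ (1 - t) * G s
  have hG1 : G 1 ≤ Ψ := by
    simpa using single_le_sum (f := fun s : ℕ => (s : ℝ) ^ (1 - t) * G s)
      (fun s _ => mul_nonneg (by positivity) (hGnn s)) (by rw [mem_Icc]; omega : 1 ∈ Icc 1 (m / 2))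
  have hG0Ψ : G 0 ≤ A⁻¹ * Ψ := hG0.trans (mul_le_mul_of_nonneg_left hG1 (by positivity))
  have hC : 0 < t / (t - 1) := div_pos (by linarith) (by linarith)
  have hm3 : ((m : ℝ) / 3) ^ (-t) = 3 ^ t * (m : ℝ) ^ (-t) := by
    rw [div_rpow (by positivity) (by norm_num), rpow_neg (by norm_num : (0 : ℝ) ≤ 3),
      div_inv_eq_mul, mul_comm]
  calc _ ≤ 6 * (A ^ 2 * ((m : ℝ) / 3) ^ (-t)) *
          ∑ q ∈ range (m + 1) ×ˢ range (m + 1), minPartWeight G t m q.1 q.2 :=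
        sum_triple_product_le_sum_box hGnn hG (by linarith)
    _ ≤ 6 * (A ^ 2 * ((m : ℝ) / 3) ^ (-t)) * (t / (t - 1) * (A⁻¹ * Ψ + Ψ)) := by
        gcongr
        exact (sum_box_minPartWeight_le hGnn ht).trans
          (mul_le_mul_of_nonneg_left (by linarith) hC.le)
    _ = _ := by
        rw [hm3]
        field_simp

end ThreePartCompositions

theorem gauss'_nonneg (d : ℕ) {η : ℝ} (hη : 0 ≤ η) (x : Fin d → ℤ) : 0 ≤ gauss' d η x := by
  unfold gauss'
  split_ifs
  · exact zero_le_one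
  · exact le_rfl
  · exact mul_nonneg (rpow_nonneg (by positivity) _) (exp_nonneg _)

theorem gauss'_le (d : ℕ) {η : ℝ} (hη : 0 < η) (x : Fin d → ℤ) :
    gauss' d η x ≤ (2 * π * η) ^ (-(d : ℝ) / 2) := by
  rw [gauss', if_neg hη.ne']
  refine mul_le_of_le_one_right (by positivity) (exp_le_one_iff.2 ?_)
  exact div_nonpos_of_nonpos_of_nonneg (neg_nonpos.2 (by positivity)) (by positivity)

theorem gauss'_natCast_mul_le (d : ℕ) {ν : ℝ} (hν : 0 < ν) {n : ℕ} (hn : 1 ≤ n)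
    (x : Fin d → ℤ) :
    gauss' d (n * ν) x ≤ (2 * π * ν) ^ (-((d : ℝ) / 2)) * (n : ℝ) ^ (-((d : ℝ) / 2)) := by
  have hn0 : (0 : ℝ) < n := by exact_mod_cast hn
  calc _ ≤ (2 * π * (n * ν)) ^ (-(d : ℝ) / 2) := gauss'_le d (by positivity) x
    _ = _ := by
      rw [neg_div, show 2 * π * (n * ν) = 2 * π * ν * n by ring, mul_rpow (by positivity) hn0.le]

theorem gauss'_zero_le (d : ℕ) {η : ℝ} (hη : 0 < η) (x : Fin d → ℤ) :
    gauss' d 0 x ≤ ((2 * π * η) ^ (-(d : ℝ) / 2))⁻¹ * gauss' d η x := by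
  have hA : 0 < (2 * π * η) ^ (-(d : ℝ) / 2) := by positivity
  by_cases hx : x = 0
  · subst hx
    simp [gauss', hη.ne', hA.ne']
  · rw [gauss', if_pos rfl, if_neg hx]
    exact mul_nonneg (inv_nonneg.2 hA.le) (gauss'_nonneg d hη.le x)

theorem two_pi_mul_rpow_neg_le {c ν t : ℝ} (hc : 0 < c) (hν : 1 / (2 * c) ≤ ν) (ht : 0 ≤ t) :
    (2 * π * ν) ^ (-t) ≤ c ^ t := by
  have hν0 : 0 < ν := lt_of_lt_of_le (by positivity) hν
  have hcν : c⁻¹ ≤ 2 * π * ν := by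
    have : 2 * ν ≤ 2 * π * ν := by nlinarith [pi_gt_three]
    calc c⁻¹ = 2 * (1 / (2 * c)) := by field_simp
      _ ≤ 2 * π * ν := by linarith
  rw [rpow_neg (by positivity), ← inv_rpow (by positivity)]
  exact rpow_le_rpow (by positivity) (inv_le_of_inv_le₀ hc hcν) ht

/-- The two-edge lace diagram bound `P_m^{(2)}(x) ≤ K ψ_m(x)` for `d ≥ 5`:
`∑_{k+l+j=m, l,j≥1} φ_{kν}(x)φ_{lν}(x)φ_{jν}(x)
  ≤ K m^{-d/2} ∑_{k=1}^{⌊m/2⌋} k^{1-d/2} φ_{kν}(x)`. -/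
theorem two_edge_diagram_bound (d : ℕ) (hd : 5 ≤ d) :
    ∃ K : ℝ, 0 < K ∧ ∀ ν : ℝ, 1 / (2 * d) ≤ ν → ∀ m : ℕ, 2 ≤ m → ∀ x : Fin d → ℤ,
      (∑ k ∈ Finset.range m, ∑ l ∈ Finset.Icc 1 (m - 1 - k),
        gauss' d ((k : ℝ) * ν) x * gauss' d ((l : ℝ) * ν) x *
          gauss' d (((m - k - l : ℕ) : ℝ) * ν) x)
        ≤ K * (m : ℝ) ^ (-(d : ℝ) / 2) *
            ∑ k ∈ Finset.Icc 1 (m / 2), (k : ℝ) ^ (1 - (d : ℝ) / 2) * gauss' d ((k : ℝ) * ν) x := by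
  simp only [neg_div]
  set t : ℝ := (d : ℝ) / 2 with ht_def
  have hd0 : (0 : ℝ) < d := by exact_mod_cast (by omega : 0 < d)
  have ht : 1 < t := by
    have : (5 : ℝ) ≤ d := by exact_mod_cast hd
    linarith
  have hC : 0 < t / (t - 1) := div_pos (by linarith) (by linarith)
  refine ⟨6 * (t / (t - 1)) * 3 ^ t * ((d : ℝ) ^ t + ((d : ℝ) ^ t) ^ 2), by positivity, ?_⟩
  intro ν hν m hm x
  have hν0 : 0 < ν := lt_of_lt_of_le (by positivity) hν
  have hG0 : gauss' d ((0 : ℕ) * ν) x ≤ ((2 * π * ν) ^ (-t))⁻¹ * gauss' d ((1 : ℕ) * ν) x := by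
    simpa [neg_div, ← ht_def] using gauss'_zero_le d hν0 x
  calc _ ≤ 6 * (t / (t - 1)) * 3 ^ t * ((2 * π * ν) ^ (-t) + ((2 * π * ν) ^ (-t)) ^ 2) *
        (m : ℝ) ^ (-t) * ∑ s ∈ Icc 1 (m / 2), (s : ℝ) ^ (1 - t) * gauss' d (s * ν) x :=
      sum_triple_product_le (G := fun n => gauss' d (n * ν) x)
        (fun n => gauss'_nonneg d (by positivity) x) (fun n hn => gauss'_natCast_mul_le d hν0 hn x)
        ht (by positivity) hG0 hm
    _ ≤ _ := by
      have hA := two_pi_mul_rpow_neg_le hd0 hν (by linarith : 0 ≤ t)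
      gcongr
      exact sum_nonneg fun s _ => mul_nonneg (by positivity) (gauss'_nonneg d (by positivity) x)
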